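/- For any semi De Morgan algebra, the kernel K = {a'' : a ∈ L}, equipped with ∩, ∪, *, 1 = h(⊤), 0 = h(⊥) defined via h and e, is a De Morgan algebra. -/

import Mathlib

/-! Because `a' = a'''` and `(a ∧ b)'' = a'' ∧ b''`, the kernel is closed under `'` and `∧`
and `''` is the identity on it. So the injective inclusion `e` turns `∩` into `∧`, `*` into
`'`, `1, 0` into `⊤, ⊥` and `∪` into `(· ∨ ·)''`, and each De Morgan law becomes an identity
in `L`. It follows from the lattice laws once the surplus double negations are absorbed,
using that `'` is antitone and that `(a'' ∨ b)' = a''' ∧ b' = (a ∨ b)'`. -/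

/-- A semi De Morgan algebra: a bounded distributive lattice with a unary
operation `neg` satisfying (S2)-(S5). -/
class SemiDeMorgan (L : Type*) extends DistribLattice L, BoundedOrder L where
  neg : L → L
  neg_bot : neg ⊥ = ⊤
  neg_top : neg ⊤ = ⊥
  neg_sup : ∀ a b : L, neg (a ⊔ b) = neg a ⊓ neg b
  neg_neg_inf : ∀ a b : L, neg (neg (a ⊓ b)) = neg (neg a) ⊓ neg (neg b)
  neg_neg_neg : ∀ a : L, neg (neg (neg a)) = neg a

namespace SemiDeMorgan

variable {L : Type*} [SemiDeMorgan L]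

/-- The kernel `K = {a'' : a ∈ L}`. -/
abbrev Kernel (L : Type*) [SemiDeMorgan L] : Type _ :=
  {x : L // ∃ a : L, x = neg (neg a)}

/-- `h : L → K`, `a ↦ a''`. -/
def h (a : L) : Kernel L := ⟨neg (neg a), a, rfl⟩

/-- `e : K → L`, the natural inclusion. -/
def e (α : Kernel L) : L := α.1

/-- `α ∩ β := h (e α ∧ e β)` -/
def kcap (α β : Kernel L) : Kernel L := h (e α ⊓ e β)

/-- `α ∪ β := h ((e α ∨ e β)'')` -/
def kcup (α β : Kernel L) : Kernel L := h (neg (neg (e α ⊔ e β)))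

/-- `α* := h ((e α)')` -/
def kstar (α : Kernel L) : Kernel L := h (neg (e α))

/-- `1 := h ⊤` -/
def kone : Kernel L := h (⊤ : L)

/-- `0 := h ⊥` -/
def kzero : Kernel L := h (⊥ : L)

lemma neg_antitone : Antitone (neg : L → L) := fun a b hab => by
  rw [← sup_eq_right.mpr hab, neg_sup]
  exact inf_le_left

lemma neg_neg_neg_sup (a b : L) : neg (neg (neg a) ⊔ b) = neg (a ⊔ b) := by
  rw [neg_sup, neg_neg_neg, ← neg_sup]

lemma neg_sup_neg_neg (a b : L) : neg (a ⊔ neg (neg b)) = neg (a ⊔ b) := by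
  rw [sup_comm, neg_neg_neg_sup, sup_comm]

lemma e_injective : Function.Injective (e : Kernel L → L) := Subtype.val_injective

@[simp]
lemma neg_neg_e (α : Kernel L) : neg (neg (e α)) = e α := by
  obtain ⟨x, a, rfl⟩ := α
  exact neg_neg_neg (neg a)

@[simp]
lemma e_kcap (α β : Kernel L) : e (kcap α β) = e α ⊓ e β := by
  change neg (neg (e α ⊓ e β)) = _
  rw [neg_neg_inf, neg_neg_e, neg_neg_e]

@[simp]
lemma e_kcup (α β : Kernel L) : e (kcup α β) = neg (neg (e α ⊔ e β)) :=
  neg_neg_neg (neg (e α ⊔ e β))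

@[simp]
lemma e_kstar (α : Kernel L) : e (kstar α) = neg (e α) :=
  neg_neg_neg (e α)

@[simp]
lemma e_kone : e (kone : Kernel L) = ⊤ := by
  change neg (neg ⊤) = ⊤
  rw [neg_top, neg_bot]

@[simp]
lemma e_kzero : e (kzero : Kernel L) = ⊥ := by
  change neg (neg ⊥) = ⊥
  rw [neg_bot, neg_top]

lemma kcap_comm (α β : Kernel L) : kcap α β = kcap β α :=
  e_injective <| by simp only [e_kcap, inf_comm]

lemma kcup_comm (α β : Kernel L) : kcup α β = kcup β α :=
  e_injective <| by simp only [e_kcup, sup_comm]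

lemma kcap_assoc (α β γ : Kernel L) : kcap (kcap α β) γ = kcap α (kcap β γ) :=
  e_injective <| by simp only [e_kcap, inf_assoc]

lemma kcup_assoc (α β γ : Kernel L) : kcup (kcup α β) γ = kcup α (kcup β γ) :=
  e_injective <| by simp only [e_kcup, neg_neg_neg_sup, neg_sup_neg_neg, sup_assoc]

lemma kcap_kcup_self (α β : Kernel L) : kcap α (kcup α β) = α :=
  e_injective <| by
    rw [e_kcap, e_kcup, inf_eq_left]
    calc e α = neg (neg (e α)) := (neg_neg_e α).symm
      _ ≤ neg (neg (e α ⊔ e β)) := neg_antitone (neg_antitone le_sup_left)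

lemma kcup_kcap_self (α β : Kernel L) : kcup α (kcap α β) = α :=
  e_injective <| by rw [e_kcup, e_kcap, sup_inf_self, neg_neg_e]

lemma kcap_kcup_distrib_left (α β γ : Kernel L) :
    kcap α (kcup β γ) = kcup (kcap α β) (kcap α γ) :=
  e_injective <| by
    rw [e_kcap, e_kcup, e_kcup, e_kcap, e_kcap, ← inf_sup_left, neg_neg_inf, neg_neg_e]

lemma kcap_kone (α : Kernel L) : kcap α kone = α :=
  e_injective <| by rw [e_kcap, e_kone, inf_top_eq]

lemma kcup_kzero (α : Kernel L) : kcup α kzero = α :=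
  e_injective <| by rw [e_kcup, e_kzero, sup_bot_eq, neg_neg_e]

lemma kcap_kzero (α : Kernel L) : kcap α kzero = kzero :=
  e_injective <| by rw [e_kcap, e_kzero, inf_bot_eq]

lemma kcup_kone (α : Kernel L) : kcup α kone = kone :=
  e_injective <| by rw [e_kcup, e_kone, sup_top_eq, neg_top, neg_bot]

lemma kstar_kzero : kstar (kzero : Kernel L) = kone :=
  e_injective <| by rw [e_kstar, e_kzero, e_kone, neg_bot]

lemma kstar_kone : kstar (kone : Kernel L) = kzero :=
  e_injective <| by rw [e_kstar, e_kone, e_kzero, neg_top]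

lemma kstar_kcup (α β : Kernel L) : kstar (kcup α β) = kcap (kstar α) (kstar β) :=
  e_injective <| by rw [e_kstar, e_kcup, e_kcap, e_kstar, e_kstar, neg_neg_neg, neg_sup]

lemma kstar_kcap (α β : Kernel L) : kstar (kcap α β) = kcup (kstar α) (kstar β) :=
  e_injective <| by rw [e_kstar, e_kcap, e_kcup, e_kstar, e_kstar, neg_sup, neg_neg_e, neg_neg_e]

lemma kstar_kstar (α : Kernel L) : kstar (kstar α) = α :=
  e_injective <| by rw [e_kstar, e_kstar, neg_neg_e]

/-- The kernel of a semi De Morgan algebra, equipped with `∩, ∪, *, 1, 0`,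
is a De Morgan algebra: it is a bounded distributive lattice and `*` is an
involution satisfying the De Morgan laws. -/
theorem kernel_isDeMorgan :
    (∀ α β : Kernel L, kcap α β = kcap β α) ∧
    (∀ α β : Kernel L, kcup α β = kcup β α) ∧
    (∀ α β γ : Kernel L, kcap (kcap α β) γ = kcap α (kcap β γ)) ∧
    (∀ α β γ : Kernel L, kcup (kcup α β) γ = kcup α (kcup β γ)) ∧
    (∀ α β : Kernel L, kcap α (kcup α β) = α) ∧
    (∀ α β : Kernel L, kcup α (kcap α β) = α) ∧
    (∀ α β γ : Kernel L, kcap α (kcup β γ) = kcup (kcap α β) (kcap α γ)) ∧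
    (∀ α : Kernel L, kcap α kone = α) ∧
    (∀ α : Kernel L, kcup α kzero = α) ∧
    (∀ α : Kernel L, kcap α kzero = kzero) ∧
    (∀ α : Kernel L, kcup α kone = kone) ∧
    kstar (kzero : Kernel L) = kone ∧
    kstar (kone : Kernel L) = kzero ∧
    (∀ α β : Kernel L, kstar (kcup α β) = kcap (kstar α) (kstar β)) ∧
    (∀ α β : Kernel L, kstar (kcap α β) = kcup (kstar α) (kstar β)) ∧
    (∀ α : Kernel L, kstar (kstar α) = α) :=
  ⟨kcap_comm, kcup_comm, kcap_assoc, kcup_assoc, kcap_kcup_self, kcup_kcap_self,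
    kcap_kcup_distrib_left, kcap_kone, kcup_kzero, kcap_kzero, kcup_kone, kstar_kzero,
    kstar_kone, kstar_kcup, kstar_kcap, kstar_kstar⟩

end SemiDeMorgan
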